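/- arXiv:1506.02639 — 2 statements merged into one kernel-verified Lean document; each statement's English description precedes it below -/
import Mathlib

section
/- Let m ≥ 1 and let (A, B) be a partition of [m] × [m] with |A| ≥ δ·m² and |B| ≥ δ·m² for some δ > 0. Define W_Row to be the set of i ∈ [m] such that row i (i.e., {i} × [m]) intersects both A and B, and W_Col to be the set of j ∈ [m] such that column j (i.e., [m] × {j}) intersects both A and B. Then max(|W_Row|, |W_Col|) ≥ √δ · m. -/
open Finset

/-- If `(A,B)` partitions `[m] × [m]` and both parts have size at least `δ·m²` with `δ > 0`,
then the number of split rows or the number of split columns is at least `√δ · m`. -/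
theorem split_rows_cols_bound (m : ℕ) (hm : 1 ≤ m) (δ : ℝ) (hδ : 0 < δ)
    (A B : Finset (Fin m × Fin m))
    (hpart : A ∪ B = Finset.univ) (hdisj : Disjoint A B)
    (hA : δ * m ^ 2 ≤ (A.card : ℝ)) (hB : δ * m ^ 2 ≤ (B.card : ℝ)) :
    let WRow : Finset (Fin m) :=
      Finset.univ.filter (fun i => (∃ j, (i, j) ∈ A) ∧ (∃ j, (i, j) ∈ B))
    let WCol : Finset (Fin m) :=
      Finset.univ.filter (fun j => (∃ i, (i, j) ∈ A) ∧ (∃ i, (i, j) ∈ B))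
    Real.sqrt δ * m ≤ max (WRow.card : ℝ) (WCol.card : ℝ) := by
  intro WRow WCol
  have hmem : ∀ p : Fin m × Fin m, p ∈ A ∨ p ∈ B := by
    intro p
    have : p ∈ A ∪ B := hpart ▸ mem_univ p
    exact mem_union.mp this
  have hnot : ∀ p : Fin m × Fin m, p ∈ A → p ∈ B → False := fun p ha hb =>
    (Finset.disjoint_left.mp hdisj ha) hb
  set r : ℝ := (WRow.card : ℝ) with hr
  set c : ℝ := (WCol.card : ℝ) with hc
  have hrnn : 0 ≤ r := Nat.cast_nonneg _
  have hcnn : 0 ≤ c := Nat.cast_nonneg _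
  have hMnn : 0 ≤ max r c := le_trans hrnn (le_max_left _ _)
  have hm0 : (0:ℝ) < (m:ℝ) := by exact_mod_cast hm
  have hδ1 : δ ≤ 1 := by
    have hAle : (A.card : ℝ) ≤ (m:ℝ)^2 := by
      have h1 := card_le_card (subset_univ A)
      have h2 : (Finset.univ : Finset (Fin m × Fin m)).card = m * m := by
        simp [Finset.card_univ]
      rw [h2] at h1
      have : (A.card : ℝ) ≤ (m:ℝ) * m := by exact_mod_cast h1
      nlinarith
    nlinarith [hA, hAle, pow_pos hm0 2]
  suffices hkey : δ * (m:ℝ)^2 ≤ (max r c)^2 by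
    have h1 := Real.sqrt_le_sqrt hkey
    rw [Real.sqrt_mul hδ.le, Real.sqrt_sq hm0.le, Real.sqrt_sq hMnn] at h1
    exact h1
  by_cases hallr : ∀ i : Fin m, i ∈ WRow
  · have hrm : r = m := by
      have : WRow = Finset.univ := eq_univ_iff_forall.mpr hallr
      rw [hr, this]; simp
    have : (m:ℝ) ≤ max r c := hrm ▸ le_max_left _ _
    nlinarith
  by_cases hallc : ∀ j : Fin m, j ∈ WCol
  · have hcm : c = m := by
      have : WCol = Finset.univ := eq_univ_iff_forall.mpr hallc
      rw [hc, this]; simp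
    have : (m:ℝ) ≤ max r c := hcm ▸ le_max_right _ _
    nlinarith
  push_neg at hallr hallc
  obtain ⟨i, hi⟩ := hallr
  obtain ⟨j, hj⟩ := hallc
  have hrow : (∀ b, (i, b) ∈ A) ∨ (∀ b, (i, b) ∈ B) := by
    simp only [WRow, mem_filter, mem_univ, true_and, not_and_or, not_exists] at hi
    rcases hi with h | h
    · right; intro b
      rcases hmem (i, b) with ha | hb
      · exact absurd ha (h b)
      · exact hb
    · left; intro b
      rcases hmem (i, b) with ha | hb
      · exact ha
      · exact absurd hb (h b)
  have hcol : (∀ a, (a, j) ∈ A) ∨ (∀ a, (a, j) ∈ B) := by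
    simp only [WCol, mem_filter, mem_univ, true_and, not_and_or, not_exists] at hj
    rcases hj with h | h
    · right; intro a
      rcases hmem (a, j) with ha | hb
      · exact absurd ha (h a)
      · exact hb
    · left; intro a
      rcases hmem (a, j) with ha | hb
      · exact ha
      · exact absurd hb (h a)
  have main : ∀ (S : Finset (Fin m × Fin m)), δ * (m:ℝ)^2 ≤ (S.card : ℝ) →
      S ⊆ WRow ×ˢ WCol → δ * (m:ℝ)^2 ≤ (max r c)^2 := by
    intro S hS hsub
    have h1 : S.card ≤ WRow.card * WCol.card := by
      calc S.card ≤ (WRow ×ˢ WCol).card := card_le_card hsub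
        _ = WRow.card * WCol.card := card_product _ _
    have h2 : (S.card : ℝ) ≤ r * c := by rw [hr, hc]; exact_mod_cast h1
    have h3 : r ≤ max r c := le_max_left _ _
    have h4 : c ≤ max r c := le_max_right _ _
    nlinarith
  rcases hrow with hrA | hrB <;> rcases hcol with hcA | hcB
  · -- row i pure A, col j pure A : B ⊆ WRow ×ˢ WCol
    refine main B hB ?_
    intro p hp
    rw [mem_product]
    constructor
    · simp only [WRow, mem_filter, mem_univ, true_and]
      exact ⟨⟨j, hcA p.1⟩, ⟨p.2, by simpa using hp⟩⟩
    · simp only [WCol, mem_filter, mem_univ, true_and]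
      exact ⟨⟨i, hrA p.2⟩, ⟨p.1, by simpa using hp⟩⟩
  · exact absurd (hcB i) (fun h => hnot _ (hrA j) h)
  · exact absurd (hcA i) (fun h => hnot _ h (hrB j))
  · -- row i pure B, col j pure B : A ⊆ WRow ×ˢ WCol
    refine main A hA ?_
    intro p hp
    rw [mem_product]
    constructor
    · simp only [WRow, mem_filter, mem_univ, true_and]
      exact ⟨⟨p.2, by simpa using hp⟩, ⟨j, hcB p.1⟩⟩
    · simp only [WCol, mem_filter, mem_univ, true_and]
      exact ⟨⟨p.1, by simpa using hp⟩, ⟨i, hrB p.2⟩⟩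
end

section
/- In the Clique vs. Independent Set communication problem on a graph G with n vertices, where Alice holds a clique K and Bob holds an independent set I and they must decide whether K ∩ I ≠ ∅, there is a deterministic protocol using O(log² n) bits. -/
/-- A deterministic two-party communication protocol with inputs of types `α` (Alice)
and `β` (Bob). -/
inductive Protocol (α β : Type) where
  | leaf : Bool → Protocol α β
  | alice : (α → Bool) → Protocol α β → Protocol α β → Protocol α β
  | bob : (β → Bool) → Protocol α β → Protocol α β → Protocol α β

namespace Protocol

/-- Worst-case number of bits exchanged. -/
def cost {α β : Type} : Protocol α β → ℕ
  | leaf _ => 0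
  | alice _ t0 t1 => 1 + max t0.cost t1.cost
  | bob _ t0 t1 => 1 + max t0.cost t1.cost

/-- The output of a protocol on inputs `a`, `b`. -/
def eval {α β : Type} : Protocol α β → α → β → Bool
  | leaf c, _, _ => c
  | alice f t0 t1, a, b => if f a then t1.eval a b else t0.eval a b
  | bob f t0 t1, a, b => if f b then t1.eval a b else t0.eval a b

end Protocol

/-!
The players maintain a set `S` of candidate vertices, initially `V`, with
`K ∩ I ∩ S = K ∩ I`. If some `v ∈ K ∩ S` has at most `|S|/2` neighbours in `S`, Alice
announces it: either `v ∈ I`, or every common vertex of `K` and `I` is a neighbour of `v`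
(as `K` is a clique), and `S` shrinks to the neighbours of `v`. Otherwise, if some
`w ∈ I ∩ S` has at most `|S|/2` non-neighbours in `S`, Bob announces it and `S` shrinks to
the non-neighbours of `w`. If neither exists then `K ∩ I ∩ S = ∅`, since every vertex of `S`
is one of the two kinds. `S` halves in each round, so `log₂ n + 1` rounds of `O(log n)` bits
each decide the problem.
-/

namespace Protocol

variable {α β : Type}

def swap : Protocol α β → Protocol β α
  | leaf c => leaf c
  | alice f t0 t1 => bob f t0.swap t1.swap
  | bob f t0 t1 => alice f t0.swap t1.swap

@[simp]
theorem eval_swap (t : Protocol α β) (a : α) (b : β) : t.swap.eval b a = t.eval a b := by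
  induction t <;> simp_all [swap, eval]

@[simp]
theorem cost_swap (t : Protocol α β) : t.swap.cost = t.cost := by
  induction t <;> simp_all [swap, cost]

/-- Alice sends the `k` low-order bits of `f a`. -/
def aliceSendsBits : ℕ → (α → ℕ) → (ℕ → Protocol α β) → Protocol α β
  | 0, _, cont => cont 0
  | k + 1, f, cont =>
      alice (fun a => decide (f a % 2 = 1))
        (aliceSendsBits k (fun a => f a / 2) fun m => cont (2 * m))
        (aliceSendsBits k (fun a => f a / 2) fun m => cont (2 * m + 1))

theorem eval_aliceSendsBits (k : ℕ) (f : α → ℕ) (cont : ℕ → Protocol α β) (a : α)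
    (b : β) : (aliceSendsBits k f cont).eval a b = (cont (f a % 2 ^ k)).eval a b := by
  induction k generalizing f cont with
  | zero => simp [aliceSendsBits, Nat.mod_one]
  | succ k ih =>
    have hmod : f a % 2 ^ (k + 1) = 2 * (f a / 2 % 2 ^ k) + f a % 2 := by
      rw [pow_succ', Nat.mod_mul]; ring
    rcases Nat.mod_two_eq_zero_or_one (f a) with h | h <;>
      simp [aliceSendsBits, eval, ih, hmod, h]

theorem cost_aliceSendsBits_le (k : ℕ) (f : α → ℕ) {cont : ℕ → Protocol α β} {c : ℕ}
    (hc : ∀ m, (cont m).cost ≤ c) : (aliceSendsBits k f cont).cost ≤ k + c := by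
  induction k generalizing f cont with
  | zero => simpa [aliceSendsBits] using hc 0
  | succ k ih =>
    have h0 := ih (fun a => f a / 2) (cont := fun m => cont (2 * m)) fun m => hc _
    have h1 := ih (fun a => f a / 2) (cont := fun m => cont (2 * m + 1)) fun m => hc _
    simp only [aliceSendsBits, cost]
    omega

variable {ι : Type} [Fintype ι]

noncomputable def aliceSends (f : α → ι) (cont : ι → Protocol α β) : Protocol α β :=
  aliceSendsBits (Nat.clog 2 (Fintype.card ι)) (fun a => Fintype.equivFin ι (f a)) fun m =>
    if h : m < Fintype.card ι then cont ((Fintype.equivFin ι).symm ⟨m, h⟩) else leaf false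

noncomputable def bobSends (f : β → ι) (cont : ι → Protocol α β) : Protocol α β :=
  (aliceSends f fun i => (cont i).swap).swap

@[simp]
theorem eval_aliceSends (f : α → ι) (cont : ι → Protocol α β) (a : α) (b : β) :
    (aliceSends f cont).eval a b = (cont (f a)).eval a b := by
  have hlt : (Fintype.equivFin ι (f a) : ℕ) < 2 ^ Nat.clog 2 (Fintype.card ι) :=
    (Fintype.equivFin ι (f a)).2.trans_le (Nat.le_pow_clog one_lt_two _)
  simp [aliceSends, eval_aliceSendsBits, Nat.mod_eq_of_lt hlt]

@[simp]
theorem eval_bobSends (f : β → ι) (cont : ι → Protocol α β) (a : α) (b : β) :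
    (bobSends f cont).eval a b = (cont (f b)).eval a b := by
  simp [bobSends]

theorem cost_aliceSends_le (f : α → ι) {cont : ι → Protocol α β} {c : ℕ}
    (hc : ∀ i, (cont i).cost ≤ c) :
    (aliceSends f cont).cost ≤ Nat.clog 2 (Fintype.card ι) + c :=
  cost_aliceSendsBits_le _ _ fun m => by
    split
    · exact hc _
    · simp [cost]

theorem cost_bobSends_le (f : β → ι) {cont : ι → Protocol α β} {c : ℕ}
    (hc : ∀ i, (cont i).cost ≤ c) :
    (bobSends f cont).cost ≤ Nat.clog 2 (Fintype.card ι) + c := by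
  simpa [bobSends] using cost_aliceSends_le f (cont := fun i => (cont i).swap) (by simpa using hc)

end Protocol

namespace CliqueVsIndependentSet

open Finset Protocol

noncomputable def pick {α : Type*} (T : Finset α) : Option α :=
  if h : T.Nonempty then some h.choose else none

theorem pick_eq_none {α : Type*} {T : Finset α} (h : pick T = none) : T = ∅ := by
  unfold pick at h; split at h
  · cases h
  · simpa [not_nonempty_iff_eq_empty] using ‹¬T.Nonempty›

theorem mem_of_pick_eq_some {α : Type*} {T : Finset α} {a : α} (h : pick T = some a) :
    a ∈ T := by
  unfold pick at h; split at h
  · cases h; exact (‹T.Nonempty›).choose_spec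
  · cases h

theorem lt_two_pow_of_two_mul_le {a b t : ℕ} (ha : a < 2 ^ (t + 1)) (hb : 2 * b ≤ a) :
    b < 2 ^ t := by
  rw [pow_succ] at ha
  omega

variable {V : Type} [DecidableEq V] (G : SimpleGraph V) [DecidableRel G.Adj]

def lowDegreeClique (S K : Finset V) : Finset V :=
  {v ∈ K ∩ S | 2 * #{u ∈ S | G.Adj v u} ≤ #S}

def highDegreeIndep (S I : Finset V) : Finset V :=
  {w ∈ I ∩ S | 2 * #{u ∈ S | ¬G.Adj w u} ≤ #S}

/-- At most `t` rounds on the candidate set `S`. -/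
noncomputable def protocol [Fintype V] : ℕ → Finset V → Protocol (Finset V) (Finset V)
  | 0, _ => leaf false
  | t + 1, S =>
    aliceSends (fun K => pick (lowDegreeClique G S K)) fun
      | some v => bob (fun I => decide (v ∈ I)) (protocol t {u ∈ S | G.Adj v u}) (leaf true)
      | none => bobSends (fun I => pick (highDegreeIndep G S I)) fun
        | some w => alice (fun K => decide (w ∈ K)) (protocol t {u ∈ S | ¬G.Adj w u})
            (leaf true)
        | none => leaf false

variable {G}

theorem inter_eq_empty_of_lowDegreeClique_eq_empty_of_highDegreeIndep_eq_empty
    {S K I : Finset V} (hlow : lowDegreeClique G S K = ∅) (hhigh : highDegreeIndep G S I = ∅) :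
    K ∩ I ∩ S = ∅ := by
  refine eq_empty_of_forall_notMem fun v hv => ?_
  simp only [mem_inter] at hv
  have hsplit : #{u ∈ S | G.Adj v u} + #{u ∈ S | ¬G.Adj v u} = #S :=
    card_filter_add_card_filter_not _
  have hv_low : ¬2 * #{u ∈ S | G.Adj v u} ≤ #S := fun h =>
    notMem_empty v (hlow ▸ mem_filter.2 ⟨mem_inter.2 ⟨hv.1.1, hv.2⟩, h⟩)
  have hv_high : ¬2 * #{u ∈ S | ¬G.Adj v u} ≤ #S := fun h =>
    notMem_empty v (hhigh ▸ mem_filter.2 ⟨mem_inter.2 ⟨hv.1.2, hv.2⟩, h⟩)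
  omega

theorem inter_filter_adj_eq {S K I : Finset V} (hK : G.IsClique (K : Set V)) {v : V}
    (hvK : v ∈ K) (hvI : v ∉ I) : K ∩ I ∩ {u ∈ S | G.Adj v u} = K ∩ I ∩ S := by
  ext u
  simp only [mem_inter, mem_filter]
  constructor
  · tauto
  · rintro ⟨⟨huK, huI⟩, huS⟩
    exact ⟨⟨huK, huI⟩, huS, hK hvK huK fun h => hvI (h ▸ huI)⟩

theorem inter_filter_not_adj_eq {S K I : Finset V}
    (hI : (I : Set V).Pairwise fun u v => ¬G.Adj u v) {w : V} (hwI : w ∈ I) (hwK : w ∉ K) :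
    K ∩ I ∩ {u ∈ S | ¬G.Adj w u} = K ∩ I ∩ S := by
  ext u
  simp only [mem_inter, mem_filter]
  constructor
  · tauto
  · rintro ⟨⟨huK, huI⟩, huS⟩
    exact ⟨⟨huK, huI⟩, huS, hI hwI huI fun h => hwK (h ▸ huK)⟩

theorem eval_protocol [Fintype V] {K I : Finset V} (hK : G.IsClique (K : Set V))
    (hI : (I : Set V).Pairwise fun u v => ¬G.Adj u v) (t : ℕ) (S : Finset V)
    (hS : #S < 2 ^ t) : (protocol G t S).eval K I = true ↔ (K ∩ I ∩ S).Nonempty := by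
  induction t generalizing S with
  | zero =>
    simp [protocol, eval, card_eq_zero.1 (Nat.lt_one_iff.1 (by simpa using hS))]
  | succ t ih =>
    simp only [protocol, eval_aliceSends]
    cases hv : pick (lowDegreeClique G S K) with
    | some v =>
      obtain ⟨hvKS, hv_low⟩ := mem_filter.1 (mem_of_pick_eq_some hv)
      obtain ⟨hvK, hvS⟩ := mem_inter.1 hvKS
      by_cases hvI : v ∈ I
      · simpa [eval, hvI] using ⟨v, by simp [hvK, hvI, hvS]⟩
      · simpa [eval, hvI, inter_filter_adj_eq hK hvK hvI] using
          ih _ (lt_two_pow_of_two_mul_le hS hv_low)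
    | none =>
      simp only [eval_bobSends]
      cases hw : pick (highDegreeIndep G S I) with
      | some w =>
        obtain ⟨hwIS, hw_high⟩ := mem_filter.1 (mem_of_pick_eq_some hw)
        obtain ⟨hwI, hwS⟩ := mem_inter.1 hwIS
        by_cases hwK : w ∈ K
        · simpa [eval, hwK] using ⟨w, by simp [hwK, hwI, hwS]⟩
        · simpa [eval, hwK, inter_filter_not_adj_eq hI hwI hwK] using
            ih _ (lt_two_pow_of_two_mul_le hS hw_high)
      | none =>
        simp [eval, inter_eq_empty_of_lowDegreeClique_eq_empty_of_highDegreeIndep_eq_empty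
          (pick_eq_none hv) (pick_eq_none hw)]

variable (G)

theorem cost_protocol_le [Fintype V] (t : ℕ) (S : Finset V) :
    (protocol G t S).cost ≤ t * (2 * Nat.clog 2 (Fintype.card V + 1) + 1) := by
  set b := Nat.clog 2 (Fintype.card V + 1)
  induction t generalizing S with
  | zero => simp [protocol, cost]
  | succ t ih =>
    rw [protocol, add_one_mul]
    refine (cost_aliceSends_le _ (c := b + 1 + t * (2 * b + 1)) ?_).trans
      (by rw [Fintype.card_option]; omega)
    rintro (_ | v)
    · refine (cost_bobSends_le _ (c := 1 + t * (2 * b + 1)) ?_).trans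
        (by rw [Fintype.card_option]; omega)
      rintro (_ | w)
      · simp [cost]
      · have := ih {u ∈ S | ¬G.Adj w u}
        simp only [cost]
        omega
    · have := ih {u ∈ S | G.Adj v u}
      simp only [cost]
      omega

end CliqueVsIndependentSet

/-- Clique vs. Independent Set: on any `n`-vertex graph `G`, there is a deterministic
protocol of cost `O(log² n)` by which Alice, holding a clique `K`, and Bob, holding an
independent set `I`, decide whether `K ∩ I ≠ ∅`. -/
theorem clique_vs_independent_set :
    ∃ C : ℕ, ∀ (n : ℕ) (V : Type) (_ : Fintype V) (_ : DecidableEq V),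
      Fintype.card V = n → ∀ G : SimpleGraph V,
      ∃ P : Protocol (Finset V) (Finset V),
        P.cost ≤ C * (Nat.log 2 n + 1) ^ 2 ∧
        ∀ K I : Finset V, G.IsClique (K : Set V) →
          (I : Set V).Pairwise (fun u v => ¬ G.Adj u v) →
          (P.eval K I = true ↔ (K ∩ I).Nonempty) := by
  refine ⟨3, fun n V _ _ hn G => ?_⟩
  classical
  set L := Nat.log 2 n + 1
  have hnL : n < 2 ^ L := Nat.lt_pow_succ_log_self one_lt_two n
  have hbits : Nat.clog 2 (n + 1) ≤ L := Nat.clog_le_of_le_pow hnL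
  refine ⟨CliqueVsIndependentSet.protocol G L Finset.univ, ?_, fun K I hK hI => ?_⟩
  · calc (CliqueVsIndependentSet.protocol G L Finset.univ).cost
        ≤ L * (2 * Nat.clog 2 (n + 1) + 1) := by
          simpa [hn] using CliqueVsIndependentSet.cost_protocol_le G L Finset.univ
      _ ≤ 3 * L ^ 2 := by nlinarith
  · simpa using CliqueVsIndependentSet.eval_protocol hK hI L Finset.univ (by simpa [hn] using hnL)
end
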